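/- arXiv:1210.0570 — 2 statements merged into one kernel-verified Lean document; each statement's English description precedes it below -/
import Mathlib

section
/- Let r be a real number, B > 0, T > 0, and σ : ℝ → ℝ continuous with w(t) = ∫_t^T σ(s)² ds > 0 for all t ∈ (0,T). Define x₁(v,t) = (log(v/B) + r(T−t) + w(t)/2)/√(w(t)), x₂(v,t) = x₁(v,t) − √(w(t)), and f(v,t) = v Φ(x₁(v,t)) − B e^{−r(T−t)} Φ(x₂(v,t)). Then f satisfies (1/2)σ(t)² v² f_vv(v,t) + r v f_v(v,t) + f_t(v,t) − r f(v,t) = 0 for all (v,t) ∈ (0,∞) × (0,T). -/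
open Real Set Filter

/-- The standard normal cumulative distribution function. -/
noncomputable def Phi (x : ℝ) : ℝ :=
  (Real.sqrt (2 * Real.pi))⁻¹ * ∫ y in Set.Iic x, Real.exp (-(y ^ 2) / 2)

open MeasureTheory in
lemma integrable_gauss : Integrable fun y : ℝ => Real.exp (-(y ^ 2) / 2) := by
  have h := integrable_exp_neg_mul_sq (show (0:ℝ) < 1/2 by norm_num)
  have heq : (fun y : ℝ => Real.exp (-(y ^ 2) / 2)) = fun y => Real.exp (-(1/2) * y ^ 2) := by
    funext y; ring_nf
  rw [heq]; exact h

lemma hasDerivAt_Phi (x : ℝ) :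
    HasDerivAt Phi ((Real.sqrt (2 * Real.pi))⁻¹ * Real.exp (-(x ^ 2) / 2)) x := by
  have hg : Continuous fun y : ℝ => Real.exp (-(y ^ 2) / 2) := by continuity
  have hd : HasDerivAt (fun y => ∫ s in (0:ℝ)..y, Real.exp (-(s ^ 2) / 2))
      (Real.exp (-(x ^ 2) / 2)) x :=
    intervalIntegral.integral_hasDerivAt_right integrable_gauss.intervalIntegrable
      hg.stronglyMeasurable.stronglyMeasurableAtFilter hg.continuousAt
  have h2 := ((hd.const_add (∫ s in Set.Iic (0:ℝ), Real.exp (-(s ^ 2) / 2))).const_mul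
      (Real.sqrt (2 * Real.pi))⁻¹)
  have heq : (fun y => (Real.sqrt (2 * Real.pi))⁻¹ *
      ((∫ s in Set.Iic (0:ℝ), Real.exp (-(s ^ 2) / 2)) +
        ∫ s in (0:ℝ)..y, Real.exp (-(s ^ 2) / 2))) = Phi := by
    funext y
    rw [Phi, ← intervalIntegral.integral_Iic_sub_Iic integrable_gauss.integrableOn
      integrable_gauss.integrableOn]
    ring
  rwa [heq] at h2

noncomputable def gaussPdf (x : ℝ) : ℝ :=
  (Real.sqrt (2 * Real.pi))⁻¹ * Real.exp (-(x ^ 2) / 2)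

lemma hasDerivAt_Phi' (x : ℝ) : HasDerivAt Phi (gaussPdf x) x := hasDerivAt_Phi x


/-- The equity value `f(v,t) = v Φ(x₁) - B e^{-r(T-t)} Φ(x₂)` satisfies the
backward parabolic RPDE of the levered firm. -/
theorem equity_formula_satisfies_rpde
    (r B T : ℝ) (hB : 0 < B) (hT : 0 < T)
    (σ : ℝ → ℝ) (hσ : Continuous σ)
    (w : ℝ → ℝ) (hw : ∀ t, w t = ∫ s in t..T, (σ s) ^ 2)
    (hwpos : ∀ t ∈ Set.Ioo (0 : ℝ) T, 0 < w t)
    (x₁ x₂ : ℝ → ℝ → ℝ)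
    (hx₁ : ∀ v t, x₁ v t =
      (Real.log (v / B) + r * (T - t) + w t / 2) / Real.sqrt (w t))
    (hx₂ : ∀ v t, x₂ v t = x₁ v t - Real.sqrt (w t))
    (f : ℝ → ℝ → ℝ)
    (hf : ∀ v t, f v t =
      v * Phi (x₁ v t) - B * Real.exp (-r * (T - t)) * Phi (x₂ v t)) :
    ∀ v ∈ Set.Ioi (0 : ℝ), ∀ t ∈ Set.Ioo (0 : ℝ) T,
        (1 / 2) * (σ t) ^ 2 * v ^ 2 *
            deriv (fun v' => deriv (fun v'' => f v'' t) v') v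
          + r * v * deriv (fun v' => f v' t) v
          + deriv (fun t' => f v t') t
          - r * f v t = 0 := by
  intro v hv t ht
  have hv0 : (0:ℝ) < v := hv
  have hWpos : 0 < w t := hwpos t ht
  have hsW : 0 < Real.sqrt (w t) := Real.sqrt_pos.mpr hWpos
  have hsW2 : Real.sqrt (w t) ^ 2 = w t := Real.sq_sqrt hWpos.le
  -- Key identity
  have hkey : ∀ v' : ℝ, 0 < v' →
      v' * gaussPdf (x₁ v' t) = B * Real.exp (-r * (T - t)) * gaussPdf (x₂ v' t) := by
    intro v' hv'
    have hx1s : x₁ v' t * Real.sqrt (w t) =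
        Real.log (v' / B) + r * (T - t) + w t / 2 := by
      rw [hx₁, div_mul_cancel₀ _ hsW.ne']
    have harg : -((x₂ v' t) ^ 2) / 2 =
        -((x₁ v' t) ^ 2) / 2 + (Real.log (v' / B) + r * (T - t)) := by
      rw [hx₂]; linear_combination hx1s - hsW2 / 2
    have hgoal : gaussPdf (x₂ v' t) =
        gaussPdf (x₁ v' t) * (v' / B) * Real.exp (r * (T - t)) := by
      simp only [gaussPdf]
      rw [harg, Real.exp_add, Real.exp_add, Real.exp_log (by positivity)]
      ring
    rw [hgoal, show B * Real.exp (-r * (T - t)) *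
        (gaussPdf (x₁ v' t) * (v' / B) * Real.exp (r * (T - t)))
      = v' * gaussPdf (x₁ v' t) * (Real.exp (-r * (T - t)) * Real.exp (r * (T - t))) * (B / B)
      by ring, ← Real.exp_add, div_self hB.ne']
    norm_num
  -- v-derivatives
  have hx1v : ∀ v' : ℝ, 0 < v' →
      HasDerivAt (fun u => x₁ u t) (1 / (v' * Real.sqrt (w t))) v' := by
    intro v' hv'
    have hlog : HasDerivAt (fun u : ℝ => Real.log (u / B)) (1 / v') v' := by
      have h1 : HasDerivAt (fun u : ℝ => u / B) (1 / B) v' := (hasDerivAt_id v').div_const B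
      have h2 := h1.log (by positivity)
      convert h2 using 1
      field_simp
    have h2 := (hlog.add_const (r * (T - t) + w t / 2)).div_const (Real.sqrt (w t))
    have heq : (fun u => x₁ u t) =
        fun u => (Real.log (u / B) + (r * (T - t) + w t / 2)) / Real.sqrt (w t) := by
      funext u; rw [hx₁]; ring
    rw [heq]
    exact h2.congr_deriv (by ring)
  have hx2v : ∀ v' : ℝ, 0 < v' →
      HasDerivAt (fun u => x₂ u t) (1 / (v' * Real.sqrt (w t))) v' := by
    intro v' hv'
    have heq : (fun u => x₂ u t) = fun u => x₁ u t - Real.sqrt (w t) := by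
      funext u; rw [hx₂]
    rw [heq]; exact (hx1v v' hv').sub_const _
  -- first v-derivative of f
  have hfv : ∀ v' : ℝ, 0 < v' →
      HasDerivAt (fun u => f u t) (Phi (x₁ v' t)) v' := by
    intro v' hv'
    have hP1 : HasDerivAt (fun u => Phi (x₁ u t))
        (gaussPdf (x₁ v' t) * (1 / (v' * Real.sqrt (w t)))) v' :=
      by have := (hasDerivAt_Phi' (x₁ v' t)).comp v' (hx1v v' hv'); exact this
    have hP2 : HasDerivAt (fun u => Phi (x₂ u t))
        (gaussPdf (x₂ v' t) * (1 / (v' * Real.sqrt (w t)))) v' :=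
      by have := (hasDerivAt_Phi' (x₂ v' t)).comp v' (hx2v v' hv'); exact this
    have hterm1 : HasDerivAt (fun u => u * Phi (x₁ u t))
        (1 * Phi (x₁ v' t) + v' * (gaussPdf (x₁ v' t) * (1 / (v' * Real.sqrt (w t))))) v' :=
      (hasDerivAt_id v').mul hP1
    have hterm2 := hP2.const_mul (B * Real.exp (-r * (T - t)))
    have hcomb : HasDerivAt (fun u => u * Phi (x₁ u t) - B * Real.exp (-r * (T - t)) * Phi (x₂ u t)) _ v' :=
      hterm1.sub hterm2
    have heq : (fun u => u * Phi (x₁ u t) - B * Real.exp (-r * (T - t)) * Phi (x₂ u t)) =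
        fun u => f u t := by funext u; rw [hf]
    rw [heq] at hcomb
    convert hcomb using 1
    linear_combination (-(1 / (v' * Real.sqrt (w t)))) * hkey v' hv'
  have hderiv1 : deriv (fun v' => f v' t) v = Phi (x₁ v t) := (hfv v hv0).deriv
  have hEv : (fun v' => deriv (fun v'' => f v'' t) v') =ᶠ[nhds v]
      (fun v' => Phi (x₁ v' t)) := by
    filter_upwards [Ioi_mem_nhds hv0] with u hu
    exact (hfv u hu).deriv
  have hderiv2 : deriv (fun v' => deriv (fun v'' => f v'' t) v') v =
      gaussPdf (x₁ v t) * (1 / (v * Real.sqrt (w t))) := by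
    rw [hEv.deriv_eq]
    exact ((hasDerivAt_Phi' (x₁ v t)).comp v (hx1v v hv0)).deriv
  -- t-derivatives
  have hσ2 : Continuous fun s => (σ s) ^ 2 := hσ.pow 2
  have hwd : HasDerivAt w (-(σ t) ^ 2) t := by
    have hF : HasDerivAt (fun u => ∫ s in T..u, (σ s) ^ 2) ((σ t) ^ 2) t :=
      intervalIntegral.integral_hasDerivAt_right (hσ2.intervalIntegrable T t)
        hσ2.stronglyMeasurable.stronglyMeasurableAtFilter hσ2.continuousAt
    have heq : w = fun u => -∫ s in T..u, (σ s) ^ 2 := by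
      funext u; rw [hw u, intervalIntegral.integral_symm]
    rw [heq]; exact hF.neg
  have hsqw : HasDerivAt (fun t' => Real.sqrt (w t'))
      (-(σ t) ^ 2 / (2 * Real.sqrt (w t))) t := by
    have h2 := (Real.hasDerivAt_sqrt hWpos.ne').comp t hwd
    exact h2.congr_deriv (by ring)
  have hN : HasDerivAt (fun t' => Real.log (v / B) + r * (T - t') + w t' / 2)
      (-r + (-(σ t) ^ 2) / 2) t := by
    have h1 : HasDerivAt (fun t' : ℝ => r * (T - t')) (-r) t := by
      have h2 := ((hasDerivAt_id t).const_sub T).const_mul r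
      exact h2.congr_deriv (by ring)
    have h3 := (h1.const_add (Real.log (v / B))).add (hwd.div_const 2)
    exact h3
  set D₁ : ℝ := ((-r + (-(σ t) ^ 2) / 2) * Real.sqrt (w t) -
      (Real.log (v / B) + r * (T - t) + w t / 2) * (-(σ t) ^ 2 / (2 * Real.sqrt (w t)))) /
      Real.sqrt (w t) ^ 2 with hD1
  have hx1t : HasDerivAt (fun t' => x₁ v t') D₁ t := by
    have heq : (fun t' => x₁ v t') =
        fun t' => (Real.log (v / B) + r * (T - t') + w t' / 2) / Real.sqrt (w t') := by
      funext t'; rw [hx₁]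
    rw [heq]
    exact hN.div hsqw hsW.ne'
  have hx2t : HasDerivAt (fun t' => x₂ v t')
      (D₁ - -(σ t) ^ 2 / (2 * Real.sqrt (w t))) t := by
    have heq : (fun t' => x₂ v t') = fun t' => x₁ v t' - Real.sqrt (w t') := by
      funext t'; rw [hx₂]
    rw [heq]; exact hx1t.sub hsqw
  have hPt1 : HasDerivAt (fun t' => Phi (x₁ v t')) (gaussPdf (x₁ v t) * D₁) t :=
    (hasDerivAt_Phi' (x₁ v t)).comp t hx1t
  have hPt2 : HasDerivAt (fun t' => Phi (x₂ v t'))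
      (gaussPdf (x₂ v t) * (D₁ - -(σ t) ^ 2 / (2 * Real.sqrt (w t)))) t :=
    (hasDerivAt_Phi' (x₂ v t)).comp t hx2t
  have hE : HasDerivAt (fun t' => Real.exp (-r * (T - t'))) (Real.exp (-r * (T - t)) * r) t := by
    have h1 : HasDerivAt (fun t' : ℝ => -r * (T - t')) r t := by
      have h2 := ((hasDerivAt_id t).const_sub T).const_mul (-r)
      exact h2.congr_deriv (by ring)
    exact h1.exp
  have hft : HasDerivAt (fun t' => f v t')
      (v * (gaussPdf (x₁ v t) * D₁) -
        (Real.exp (-r * (T - t)) * r * Phi (x₂ v t) +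
          Real.exp (-r * (T - t)) *
            (gaussPdf (x₂ v t) * (D₁ - -(σ t) ^ 2 / (2 * Real.sqrt (w t))))) * B) t := by
    have heq : (fun t' => f v t') =
        fun t' => v * Phi (x₁ v t') - Real.exp (-r * (T - t')) * Phi (x₂ v t') * B := by
      funext t'; rw [hf]; ring
    rw [heq]
    exact (hPt1.const_mul v).sub ((hE.mul hPt2).mul_const B)
  rw [hderiv1, hderiv2, hft.deriv, hf]
  have hvinv : v * v⁻¹ = 1 := mul_inv_cancel₀ hv0.ne'
  linear_combination (D₁ - -(σ t) ^ 2 / (2 * Real.sqrt (w t))) * hkey v hv0 +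
    ((1 / 2) * (σ t) ^ 2 * gaussPdf (x₁ v t) * (Real.sqrt (w t))⁻¹ * v) * hvinv
end

section
/- Let r be a real number, B > 0, T > 0, and σ : ℝ → ℝ continuous with σ(s)² ≥ m for some m > 0 and all s ∈ [0,T]. Define w(t) = ∫_t^T σ(s)² ds, x₁(v,t) = (log(v/B) + r(T−t) + w(t)/2)/√(w(t)), x₂(v,t) = x₁(v,t) − √(w(t)), d(v,t) = B e^{−r(T−t)}/v, and F(v,t) = B e^{−r(T−t)} [Φ(x₂(v,t)) + (1/d(v,t)) Φ(−x₁(v,t))]. Then for every v > 0, F(v,t) → min(v, B) as t → T from the left. -/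
open Real Set Filter MeasureTheory Topology

lemma gauss_fun_eq : (fun y : ℝ => Real.exp (-(y ^ 2) / 2)) =
    fun y : ℝ => Real.exp (-(1/2 : ℝ) * y ^ 2) := by
  funext y; congr 1; ring

lemma gauss_integrable : Integrable (fun y : ℝ => Real.exp (-(y ^ 2) / 2)) := by
  rw [gauss_fun_eq]
  exact integrable_exp_neg_mul_sq (by norm_num)

lemma gauss_total : (∫ y : ℝ, Real.exp (-(y ^ 2) / 2)) = Real.sqrt (2 * Real.pi) := by
  rw [gauss_fun_eq]
  rw [show (fun y : ℝ => Real.exp (-(1/2 : ℝ) * y ^ 2)) =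
      fun y : ℝ => Real.exp (-(1/2 : ℝ) * y ^ 2) from rfl]
  rw [integral_gaussian]
  congr 1
  ring

lemma sqrt2pi_pos : 0 < Real.sqrt (2 * Real.pi) :=
  Real.sqrt_pos.mpr (by positivity)

lemma Phi_tendsto_atTop : Tendsto Phi atTop (𝓝 1) := by
  have h := (MeasureTheory.aecover_Iic (μ := (volume : Measure ℝ)) (l := atTop)
      tendsto_id).integral_tendsto_of_countably_generated gauss_integrable
  rw [gauss_total] at h
  have h2 := h.const_mul (Real.sqrt (2 * Real.pi))⁻¹
  rw [inv_mul_cancel₀ (ne_of_gt sqrt2pi_pos)] at h2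
  exact h2

lemma Phi_tendsto_atBot : Tendsto Phi atBot (𝓝 0) := by
  have h := (MeasureTheory.aecover_Ioi (μ := (volume : Measure ℝ)) (l := atBot)
      tendsto_id).integral_tendsto_of_countably_generated gauss_integrable
  rw [gauss_total] at h
  have heq : ∀ x : ℝ, (∫ y in Set.Iic x, Real.exp (-(y ^ 2) / 2)) =
      Real.sqrt (2 * Real.pi) - ∫ y in Set.Ioi x, Real.exp (-(y ^ 2) / 2) := by
    intro x
    rw [← gauss_total,
      ← intervalIntegral.integral_Iic_add_Ioi (b := x) gauss_integrable.integrableOn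
        gauss_integrable.integrableOn]
    ring
  have h2 := ((tendsto_const_nhds (x := Real.sqrt (2 * Real.pi))).sub h).const_mul
    (Real.sqrt (2 * Real.pi))⁻¹
  simp only [sub_self, mul_zero] at h2
  refine h2.congr fun x => ?_
  simp [Phi, heq x]

lemma Phi_continuous : Continuous Phi := by
  have heq : ∀ x : ℝ, (∫ y in Set.Iic x, Real.exp (-(y ^ 2) / 2)) =
      (∫ y in Set.Iic (0 : ℝ), Real.exp (-(y ^ 2) / 2)) +
        ∫ y in (0 : ℝ)..x, Real.exp (-(y ^ 2) / 2) := by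
    intro x
    rw [← intervalIntegral.integral_Iic_sub_Iic gauss_integrable.integrableOn
      gauss_integrable.integrableOn]
    ring
  have hc : Continuous fun x : ℝ => ∫ y in Set.Iic x, Real.exp (-(y ^ 2) / 2) := by
    rw [funext heq]
    exact continuous_const.add (gauss_integrable.continuous_primitive 0)
  unfold Phi
  exact continuous_const.mul hc

lemma Phi_zero : Phi 0 = 1 / 2 := by
  have h1 : (∫ y in Set.Iic (0 : ℝ), Real.exp (-(y ^ 2) / 2)) =
      ∫ y in Set.Ioi (0 : ℝ), Real.exp (-(y ^ 2) / 2) := by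
    have := integral_comp_neg_Iic (0 : ℝ)
      (fun y => Real.exp (-(y ^ 2) / 2))
    simpa using this
  have h2 := intervalIntegral.integral_Iic_add_Ioi (b := (0 : ℝ))
    gauss_integrable.integrableOn gauss_integrable.integrableOn
  rw [gauss_total] at h2
  have h3 : (∫ y in Set.Iic (0 : ℝ), Real.exp (-(y ^ 2) / 2)) =
      Real.sqrt (2 * Real.pi) / 2 := by linarith
  unfold Phi
  rw [h3]
  field_simp [ne_of_gt sqrt2pi_pos]

/-- final condition of the risky debt: `F(v,t) → min v B` as `t → T⁻`. -/
theorem debt_final_condition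
    (r B T m : ℝ) (hB : 0 < B) (hT : 0 < T) (hm : 0 < m)
    (σ : ℝ → ℝ) (hσ : Continuous σ)
    (hσm : ∀ s ∈ Set.Icc (0 : ℝ) T, m ≤ (σ s) ^ 2)
    (w : ℝ → ℝ) (hw : ∀ t, w t = ∫ s in t..T, (σ s) ^ 2)
    (x₁ x₂ d : ℝ → ℝ → ℝ)
    (hx₁ : ∀ v t, x₁ v t =
      (Real.log (v / B) + r * (T - t) + w t / 2) / Real.sqrt (w t))
    (hx₂ : ∀ v t, x₂ v t = x₁ v t - Real.sqrt (w t))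
    (hd : ∀ v t, d v t = B * Real.exp (-r * (T - t)) / v)
    (F : ℝ → ℝ → ℝ)
    (hF : ∀ v t, F v t = B * Real.exp (-r * (T - t)) *
      (Phi (x₂ v t) + (1 / d v t) * Phi (-(x₁ v t)))) :
    ∀ v > (0 : ℝ),
      Filter.Tendsto (fun t => F v t) (nhdsWithin T (Set.Iio T))
        (nhds (min v B)) := by
  intro v hv
  set l := nhdsWithin T (Set.Iio T) with hl
  -- supremum of σ² on [0,T]
  obtain ⟨s₀, hs₀, hM⟩ := isCompact_Icc.exists_isMaxOn (nonempty_Icc.mpr hT.le)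
    ((hσ.pow 2).continuousOn (s := Set.Icc 0 T))
  set M := σ s₀ ^ 2 with hMdef
  have hint : ∀ a b : ℝ, IntervalIntegrable (fun s => σ s ^ 2) volume a b :=
    fun a b => (hσ.pow 2).intervalIntegrable a b
  have hwub : ∀ t ∈ Set.Icc (0 : ℝ) T, w t ≤ M * (T - t) := by
    intro t ht
    rw [hw]
    calc (∫ s in t..T, σ s ^ 2) ≤ ∫ _ in t..T, M :=
          intervalIntegral.integral_mono_on ht.2 (hint t T) intervalIntegrable_const
            (fun x hx => hM ⟨le_trans ht.1 hx.1, hx.2⟩)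
      _ = M * (T - t) := by rw [intervalIntegral.integral_const]; simp [smul_eq_mul]; ring
  have hwlb : ∀ t ∈ Set.Icc (0 : ℝ) T, m * (T - t) ≤ w t := by
    intro t ht
    rw [hw]
    calc m * (T - t) = ∫ _ in t..T, m := by
          rw [intervalIntegral.integral_const]; simp [smul_eq_mul]; ring
      _ ≤ ∫ s in t..T, σ s ^ 2 :=
          intervalIntegral.integral_mono_on ht.2 intervalIntegrable_const (hint t T)
            (fun x hx => hσm x ⟨le_trans ht.1 hx.1, hx.2⟩)
  have hev : ∀ᶠ t in l, t ∈ Set.Ioo 0 T := Ioo_mem_nhdsLT_of_mem ⟨hT, le_rfl⟩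
  have hTt : Tendsto (fun t => T - t) l (𝓝 0) := by
    have h0 : Tendsto (fun t : ℝ => T - t) l (𝓝 (T - T)) :=
      ((continuous_const.sub continuous_id).tendsto T).mono_left nhdsWithin_le_nhds
    simpa using h0
  have hw0 : Tendsto w l (𝓝 0) := by
    have hup : Tendsto (fun t => M * (T - t)) l (𝓝 0) := by
      simpa using hTt.const_mul M
    refine tendsto_of_tendsto_of_tendsto_of_le_of_le' tendsto_const_nhds hup ?_ ?_
    · filter_upwards [hev] with t ht
      have h1 := hwlb t ⟨ht.1.le, ht.2.le⟩
      nlinarith [ht.2, hm.le]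
    · filter_upwards [hev] with t ht
      exact hwub t ⟨ht.1.le, ht.2.le⟩
  have hsq0 : Tendsto (fun t => Real.sqrt (w t)) l (𝓝 0) := by
    have := (Real.continuous_sqrt.tendsto 0).comp hw0
    simpa [Function.comp_def] using this
  have hwpos : ∀ᶠ t in l, 0 < w t := by
    filter_upwards [hev] with t ht
    have h1 := hwlb t ⟨ht.1.le, ht.2.le⟩
    nlinarith [ht.2]
  have hsqpos : ∀ᶠ t in l, 0 < Real.sqrt (w t) :=
    hwpos.mono fun t ht => Real.sqrt_pos.mpr ht
  have hinv : Tendsto (fun t => (Real.sqrt (w t))⁻¹) l atTop :=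
    tendsto_inv_nhdsGT_zero.comp
      (tendsto_nhdsWithin_of_tendsto_nhds_of_eventually_within _ hsq0 hsqpos)
  have hpre : Tendsto (fun t => B * Real.exp (-r * (T - t))) l (𝓝 B) := by
    have hc : Continuous fun t : ℝ => B * Real.exp (-r * (T - t)) := by continuity
    have h2 : Tendsto (fun t => B * Real.exp (-r * (T - t))) l
        (𝓝 (B * Real.exp (-r * (T - T)))) := (hc.tendsto T).mono_left nhdsWithin_le_nhds
    simpa using h2
  have hFeq : ∀ t, F v t =
      B * Real.exp (-r * (T - t)) * Phi (x₂ v t) + v * Phi (-(x₁ v t)) := by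
    intro t
    rw [hF, hd]
    have hE : Real.exp (-r * (T - t)) ≠ 0 := Real.exp_ne_zero _
    field_simp
  have key : ∀ L₂ L₁ : ℝ, Tendsto (fun t => Phi (x₂ v t)) l (𝓝 L₂) →
      Tendsto (fun t => Phi (-(x₁ v t))) l (𝓝 L₁) →
      B * L₂ + v * L₁ = min v B →
      Tendsto (fun t => F v t) l (𝓝 (min v B)) := by
    intro L₂ L₁ h2 h1 hsum
    have h := (hpre.mul h2).add ((tendsto_const_nhds (x := v)).mul h1)
    rw [hsum] at h
    exact h.congr fun t => (hFeq t).symm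
  have hN : Tendsto (fun t => Real.log (v / B) + r * (T - t) + w t / 2) l
      (𝓝 (Real.log (v / B))) := by
    have h1 := hTt.const_mul r
    have h2 := ((tendsto_const_nhds (x := Real.log (v / B))).add h1).add (hw0.div_const 2)
    simpa using h2
  have hx₁eq : ∀ t, x₁ v t =
      (Real.log (v / B) + r * (T - t) + w t / 2) * (Real.sqrt (w t))⁻¹ :=
    fun t => by rw [hx₁, div_eq_mul_inv]
  have hsmall : ∀ᶠ t in l, Real.sqrt (w t) ≤ 1 := by
    have := hsq0.eventually (eventually_le_nhds (by norm_num : (0:ℝ) < 1))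
    exact this
  rcases lt_trichotomy v B with hvB | hvB | hvB
  · -- v < B : limit is v
    have hlog : Real.log (v / B) < 0 :=
      Real.log_neg (div_pos hv hB) ((div_lt_one hB).mpr hvB)
    have hx1bot : Tendsto (fun t => x₁ v t) l atBot :=
      (Filter.Tendsto.neg_mul_atTop hlog hN hinv).congr fun t => (hx₁eq t).symm
    have hx2bot : Tendsto (fun t => x₂ v t) l atBot := by
      refine tendsto_atBot_mono (fun t => ?_) hx1bot
      rw [hx₂]
      linarith [Real.sqrt_nonneg (w t)]
    have hPhi2 : Tendsto (fun t => Phi (x₂ v t)) l (𝓝 0) :=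
      Phi_tendsto_atBot.comp hx2bot
    have hPhi1 : Tendsto (fun t => Phi (-(x₁ v t))) l (𝓝 1) :=
      Phi_tendsto_atTop.comp (tendsto_neg_atBot_atTop.comp hx1bot)
    refine key 0 1 hPhi2 hPhi1 ?_
    rw [min_eq_left hvB.le]; ring
  · -- v = B : limit is v = B
    have hlog0 : Real.log (v / B) = 0 := by
      rw [hvB, div_self hB.ne', Real.log_one]
    have hA : Tendsto (fun t => r * (T - t) / Real.sqrt (w t)) l (𝓝 0) := by
      have hg : Tendsto (fun t => |r| * Real.sqrt (T - t) / Real.sqrt m) l (𝓝 0) := by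
        have := (((Real.continuous_sqrt.tendsto 0).comp hTt).const_mul |r|).div_const
          (Real.sqrt m)
        simpa using this
      refine squeeze_zero_norm' ?_ hg
      filter_upwards [hev] with t ht
      have hτ : 0 < T - t := sub_pos.mpr ht.2
      have hwt : 0 < w t := by
        have h1 := hwlb t ⟨ht.1.le, ht.2.le⟩
        nlinarith
      have hsqw : 0 < Real.sqrt (w t) := Real.sqrt_pos.mpr hwt
      have hmτ : Real.sqrt m * Real.sqrt (T - t) ≤ Real.sqrt (w t) := by
        rw [← Real.sqrt_mul hm.le]
        exact Real.sqrt_le_sqrt (hwlb t ⟨ht.1.le, ht.2.le⟩)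
      have hmτpos : 0 < Real.sqrt m * Real.sqrt (T - t) :=
        mul_pos (Real.sqrt_pos.mpr hm) (Real.sqrt_pos.mpr hτ)
      have h1 : ‖r * (T - t) / Real.sqrt (w t)‖ = |r| * (T - t) / Real.sqrt (w t) := by
        rw [Real.norm_eq_abs, abs_div, abs_mul, abs_of_pos hτ, abs_of_pos hsqw]
      rw [h1]
      calc |r| * (T - t) / Real.sqrt (w t)
          ≤ |r| * (T - t) / (Real.sqrt m * Real.sqrt (T - t)) := by
            apply div_le_div_of_nonneg_left _ hmτpos hmτ
            positivity
        _ = |r| * ((T - t) / Real.sqrt (T - t)) / Real.sqrt m := by ring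
        _ = |r| * Real.sqrt (T - t) / Real.sqrt m := by rw [Real.div_sqrt]
    have hBt : Tendsto (fun t => Real.sqrt (w t) / 2) l (𝓝 0) := by
      simpa using hsq0.div_const 2
    have heqev : ∀ᶠ t in l, x₁ v t =
        r * (T - t) / Real.sqrt (w t) + Real.sqrt (w t) / 2 := by
      filter_upwards [hev] with t ht
      rw [hx₁, hlog0, zero_add, add_div, div_right_comm, Real.div_sqrt]
    have hx1zero : Tendsto (fun t => x₁ v t) l (𝓝 0) := by
      have h := hA.add hBt
      simp only [add_zero] at h
      exact Tendsto.congr' (EventuallyEq.symm heqev) h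
    have hx2zero : Tendsto (fun t => x₂ v t) l (𝓝 0) := by
      have h := hx1zero.sub hsq0
      simp only [sub_zero] at h
      exact h.congr fun t => (hx₂ v t).symm
    have hPhi2 : Tendsto (fun t => Phi (x₂ v t)) l (𝓝 (1/2)) := by
      have := (Phi_continuous.tendsto 0).comp hx2zero
      rwa [Phi_zero] at this
    have hPhi1 : Tendsto (fun t => Phi (-(x₁ v t))) l (𝓝 (1/2)) := by
      have hneg : Tendsto (fun t => -(x₁ v t)) l (𝓝 0) := by
        simpa using hx1zero.neg
      have := (Phi_continuous.tendsto 0).comp hneg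
      rwa [Phi_zero] at this
    refine key (1/2) (1/2) hPhi2 hPhi1 ?_
    rw [hvB, min_self]; ring
  · -- B < v : limit is B
    have hlog : 0 < Real.log (v / B) :=
      Real.log_pos ((one_lt_div hB).mpr hvB)
    have hx1top : Tendsto (fun t => x₁ v t) l atTop :=
      (Filter.Tendsto.pos_mul_atTop hlog hN hinv).congr fun t => (hx₁eq t).symm
    have hx2top : Tendsto (fun t => x₂ v t) l atTop := by
      refine tendsto_atTop_mono' l ?_ (tendsto_atTop_add_const_right l (-1) hx1top)
      filter_upwards [hsmall] with t ht
      rw [hx₂]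
      linarith
    have hPhi2 : Tendsto (fun t => Phi (x₂ v t)) l (𝓝 1) :=
      Phi_tendsto_atTop.comp hx2top
    have hPhi1 : Tendsto (fun t => Phi (-(x₁ v t))) l (𝓝 0) :=
      Phi_tendsto_atBot.comp (tendsto_neg_atTop_atBot.comp hx1top)
    refine key 1 0 hPhi2 hPhi1 ?_
    rw [min_eq_right hvB.le]; ring
end
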